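/- Let M be a Garside monoid and τ : M → QZ(M) send g to its minimal quasi-central left-multiple τ_g. Then τ is a semilattice homomorphism for the join (lcm for left-divisibility): τ_{g ∨ h} = τ_g ∨ τ_h for all g, h in M. -/

import Mathlib

/-- Left-divisibility in a monoid. -/
def LeftDvd {M : Type*} [Monoid M] (a b : M) : Prop := ∃ c, b = a * c

/-- Right-divisibility in a monoid. -/
def MonRightDvd {M : Type*} [Monoid M] (a b : M) : Prop := ∃ c, b = c * a

/-- An element `g` of a monoid is quasi-central if `gM = Mg` as sets. -/
def QuasiCentral {M : Type*} [Monoid M] (g : M) : Prop :=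
  ∀ x : M, (∃ m, x = g * m) ↔ (∃ m, x = m * g)

/-- An atom of a monoid: a non-identity element that is not a product of two
non-identity elements. -/
def MonAtom {M : Type*} [Monoid M] (a : M) : Prop :=
  a ≠ 1 ∧ ∀ b c : M, a = b * c → b = 1 ∨ c = 1

/-- A Garside-monoid structure on a monoid `M`: `M` is cancellative, noetherian
for the factor relation, its left- and right-divisibility orders are lattices,
and it has a quasi-central Garside element `Δ` whose powers are left-divisible
by every element. -/
structure GarsideStruct (M : Type*) [Monoid M] where
  cancel_left : ∀ a b c : M, a * b = a * c → b = c
  cancel_right : ∀ a b c : M, b * a = c * a → b = c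
  wf : WellFounded (fun w w' : M => (∃ w1 w2, w' = w1 * w * w2) ∧ w ≠ w')
  lcmL : M → M → M
  lcmL_left : ∀ a b, LeftDvd a (lcmL a b)
  lcmL_right : ∀ a b, LeftDvd b (lcmL a b)
  lcmL_min : ∀ a b k, LeftDvd a k → LeftDvd b k → LeftDvd (lcmL a b) k
  gcdL : M → M → M
  gcdL_left : ∀ a b, LeftDvd (gcdL a b) a
  gcdL_right : ∀ a b, LeftDvd (gcdL a b) b
  gcdL_max : ∀ a b k, LeftDvd k a → LeftDvd k b → LeftDvd k (gcdL a b)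
  lcmR : M → M → M
  lcmR_left : ∀ a b, MonRightDvd a (lcmR a b)
  lcmR_right : ∀ a b, MonRightDvd b (lcmR a b)
  lcmR_min : ∀ a b k, MonRightDvd a k → MonRightDvd b k → MonRightDvd (lcmR a b) k
  gcdR : M → M → M
  gcdR_left : ∀ a b, MonRightDvd (gcdR a b) a
  gcdR_right : ∀ a b, MonRightDvd (gcdR a b) b
  gcdR_max : ∀ a b k, MonRightDvd k a → MonRightDvd k b → MonRightDvd k (gcdR a b)
  delta : M
  delta_qc : QuasiCentral delta
  delta_pow : ∀ g : M, ∃ n : ℕ, LeftDvd g (delta ^ n)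

/-!
The join `τ g ∨ τ h` of two quasi-central elements is again quasi-central: both `τ g` and
`τ h` divide it on each side, so it coincides with the right lcm of `τ g` and `τ h`. Being a
common multiple of `g` and `h`, it is then divisible by `τ (g ∨ h)`. Conversely `τ (g ∨ h)` is
a quasi-central multiple of `g` and of `h`, hence of `τ g` and `τ h`, hence of their join.
Noetherianity makes left-divisibility antisymmetric.
-/

section

variable {M : Type*} [Monoid M]

theorem LeftDvd.trans {a b c : M} (hab : LeftDvd a b) (hbc : LeftDvd b c) : LeftDvd a c := by
  obtain ⟨u, rfl⟩ := hab
  obtain ⟨v, rfl⟩ := hbc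
  exact ⟨u * v, mul_assoc a u v⟩

theorem QuasiCentral.leftDvd_mul_left {a x : M} (ha : QuasiCentral a) (hx : LeftDvd a x)
    (m : M) : LeftDvd a (m * x) := by
  obtain ⟨y, rfl⟩ := (ha x).mp hx
  exact (ha _).mpr ⟨m * y, (mul_assoc m y a).symm⟩

namespace GarsideStruct

theorem eq_one_of_eq_mul_mul (GS : GarsideStruct M) {x w z : M} (h : x = w * x * z) :
    w = 1 ∧ z = 1 := by
  -- `x` and `w * x` are factors of each other, which noetherianity forbids unless they are equal.
  have hwx : x = w * x := by
    by_contra hne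
    exact GS.wf.asymmetric x (w * x) ⟨⟨w, 1, (mul_one _).symm⟩, hne⟩
      ⟨⟨1, z, by rwa [one_mul]⟩, Ne.symm hne⟩
  have hw : w = 1 := GS.cancel_right x w 1 (by rw [one_mul, ← hwx])
  subst hw
  rw [one_mul] at h
  exact ⟨rfl, GS.cancel_left x z 1 (by rw [mul_one, ← h])⟩

theorem leftDvd_antisymm (GS : GarsideStruct M) {a b : M} (hab : LeftDvd a b)
    (hba : LeftDvd b a) : a = b := by
  obtain ⟨c, rfl⟩ := hab
  obtain ⟨d, hd⟩ := hba
  have hcd : c * d = 1 := (GS.eq_one_of_eq_mul_mul (x := a) (w := 1)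
    (by rw [one_mul, ← mul_assoc, ← hd])).2
  have hc : c = 1 :=
    (GS.eq_one_of_eq_mul_mul (x := 1) (w := c) (z := d) (by rw [mul_one, hcd])).1
  rw [hc, mul_one]

theorem lcmL_eq_lcmR_of_quasiCentral (GS : GarsideStruct M) {a b : M} (ha : QuasiCentral a)
    (hb : QuasiCentral b) :
    GS.lcmL a b = GS.lcmR a b := by
  obtain ⟨z, hz⟩ := GS.lcmL_min a b _ ((ha _).mpr (GS.lcmR_left a b))
    ((hb _).mpr (GS.lcmR_right a b))
  obtain ⟨w, hw⟩ := GS.lcmR_min a b _ ((ha _).mp (GS.lcmL_left a b))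
    ((hb _).mp (GS.lcmL_right a b))
  have hw1 : w = 1 := (GS.eq_one_of_eq_mul_mul (z := z) (by rw [mul_assoc, ← hz, ← hw])).1
  rw [hw, hw1, one_mul]

theorem quasiCentral_lcmL (GS : GarsideStruct M) {a b : M} (ha : QuasiCentral a)
    (hb : QuasiCentral b) :
    QuasiCentral (GS.lcmL a b) := by
  intro x
  constructor
  · rintro ⟨m, rfl⟩
    obtain ⟨w, hw⟩ := GS.lcmR_min a b _
      ((ha _).mp ((GS.lcmL_left a b).trans ⟨m, rfl⟩))
      ((hb _).mp ((GS.lcmL_right a b).trans ⟨m, rfl⟩))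
    exact ⟨w, by rw [hw, GS.lcmL_eq_lcmR_of_quasiCentral ha hb]⟩
  · rintro ⟨m, rfl⟩
    exact GS.lcmL_min a b _ (ha.leftDvd_mul_left (GS.lcmL_left a b) m)
      (hb.leftDvd_mul_left (GS.lcmL_right a b) m)

end GarsideStruct

end

/-- in a Garside monoid, the map `τ` sending `g` to its minimal
quasi-central left-multiple is a semilattice homomorphism for the lcm for
left-divisibility: `τ (g ∨ h) = τ g ∨ τ h`. -/
theorem stmt_11 (M : Type*) [Monoid M] (GS : GarsideStruct M)
    (τ : M → M)
    (hτqc : ∀ g, QuasiCentral (τ g))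
    (hτdvd : ∀ g, LeftDvd g (τ g))
    (hτmin : ∀ g h, QuasiCentral h → LeftDvd g h → LeftDvd (τ g) h) :
    ∀ g h : M, τ (GS.lcmL g h) = GS.lcmL (τ g) (τ h) := by
  intro g h
  have hjoin_qc : QuasiCentral (GS.lcmL (τ g) (τ h)) := GS.quasiCentral_lcmL (hτqc g) (hτqc h)
  have hjoin_mul : LeftDvd (GS.lcmL g h) (GS.lcmL (τ g) (τ h)) :=
    GS.lcmL_min g h _ ((hτdvd g).trans (GS.lcmL_left _ _)) ((hτdvd h).trans (GS.lcmL_right _ _))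
  apply GS.leftDvd_antisymm (hτmin _ _ hjoin_qc hjoin_mul)
  exact GS.lcmL_min _ _ _
    (hτmin g _ (hτqc _) ((GS.lcmL_left g h).trans (hτdvd _)))
    (hτmin h _ (hτqc _) ((GS.lcmL_right g h).trans (hτdvd _)))
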